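/- Let S be a finite set of points in the Euclidean plane and G the weighted unit-disk graph on S. Let ⟨z₀, …, z_t⟩ with t ≥ 2 be an edge-minimal shortest path from s = z₀ to a = z_t in G, and let c ∈ S be a vertex in the same connected component as s with ‖c − a‖ ≤ 1. Then d_G(s, z_{t−2}) < d_G(s, c). -/

import Mathlib

/-!
Let `z = z_{t-2}`. If `‖z - a‖ ≤ 1`, replacing the last two edges of the path by the edge `za`
(or by nothing, if `z = a`) gives, by the triangle inequality, a shortest path with fewer edges,
contradicting edge-minimality. Hence `‖z - a‖ > 1`, and since the last two edges are at least
`‖z - a‖` long, `d(s, z) + 1 < d(s, a) ≤ d(s, c) + ‖c - a‖ ≤ d(s, c) + 1`.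
-/

noncomputable section

abbrev Pt := EuclideanSpace ℝ (Fin 2)

/-- The weighted unit-disk graph on a finite point set `S`: vertices are the points of
`S`, two distinct points are adjacent iff their Euclidean distance is at most 1. -/
def UDG (S : Finset Pt) : SimpleGraph {x : Pt // x ∈ S} where
  Adj a b := a ≠ b ∧ dist (a : Pt) (b : Pt) ≤ 1
  symm := by
    constructor
    intro a b hab
    exact ⟨hab.1.symm, by rw [dist_comm]; exact hab.2⟩
  loopless := by
    constructor
    intro a ha
    exact ha.1 rfl

/-- The (weighted) length of a walk: the sum of the Euclidean lengths of its edges. -/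
def wlen {S : Finset Pt} {u v : {x : Pt // x ∈ S}} (p : (UDG S).Walk u v) : ℝ :=
  (p.darts.map (fun d => dist (d.toProd.1 : Pt) (d.toProd.2 : Pt))).sum

/-- The shortest-path distance in the weighted unit-disk graph. -/
def dG (S : Finset Pt) (u v : {x : Pt // x ∈ S}) : ℝ :=
  sInf {L : ℝ | ∃ p : (UDG S).Walk u v, wlen p = L}

section WeightedLength

open SimpleGraph

variable {S : Finset Pt} {u v w : {x : Pt // x ∈ S}}

lemma wlen_nonneg (p : (UDG S).Walk u v) : 0 ≤ wlen p :=
  List.sum_nonneg <| by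
    simp only [List.mem_map]
    rintro _ ⟨d, -, rfl⟩
    exact dist_nonneg

lemma wlen_append (p : (UDG S).Walk u v) (q : (UDG S).Walk v w) :
    wlen (p.append q) = wlen p + wlen q := by
  simp [wlen, Walk.darts_append]

lemma wlen_take_add_wlen_drop (p : (UDG S).Walk u v) (n : ℕ) :
    wlen (p.take n) + wlen (p.drop n) = wlen p := by
  simp only [wlen, Walk.darts_take, Walk.darts_drop, ← List.sum_append, ← List.map_append,
    List.take_append_drop]

lemma dist_le_wlen (p : (UDG S).Walk u v) : dist (u : Pt) v ≤ wlen p := by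
  induction p with
  | nil => simp [wlen]
  | @cons x y z _ q ih =>
    calc dist (x : Pt) z ≤ dist (x : Pt) y + dist (y : Pt) z := dist_triangle _ _ _
      _ ≤ dist (x : Pt) y + wlen q := by gcongr
      _ = wlen (Walk.cons _ q) := by simp [wlen]

lemma exists_walk_length_le_one_wlen_eq_dist (h : dist (u : Pt) v ≤ 1) :
    ∃ r : (UDG S).Walk u v, r.length ≤ 1 ∧ wlen r = dist (u : Pt) v := by
  by_cases huv : u = v
  · subst huv
    exact ⟨.nil, by simp, by simp [wlen]⟩
  · have hadj : (UDG S).Adj u v := ⟨huv, h⟩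
    exact ⟨.cons hadj .nil, by simp, by simp [wlen]⟩

lemma dG_le_wlen (p : (UDG S).Walk u v) : dG S u v ≤ wlen p :=
  csInf_le ⟨0, fun _ ⟨q, hq⟩ => hq ▸ wlen_nonneg q⟩ ⟨p, rfl⟩

lemma dG_le_dG_add_wlen (h : (UDG S).Reachable u v) (q : (UDG S).Walk v w) :
    dG S u w ≤ dG S u v + wlen q := by
  suffices dG S u w - wlen q ≤ dG S u v by linarith
  refine le_csInf ⟨_, h.some, rfl⟩ ?_
  rintro _ ⟨r, rfl⟩
  have := dG_le_wlen (r.append q)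
  rw [wlen_append] at this
  linarith

end WeightedLength

/-- Consequence derived in the proof of Lemma 3: if `c` is reachable from `s` and within
Euclidean distance 1 of `a`, then `d_G(s, z_{t-2}) < d_G(s, c)` for an edge-minimal
shortest path `⟨z_0, …, z_t⟩` from `s` to `a` with `t ≥ 2`. -/
theorem stmt_10 (S : Finset Pt) (s a c : {x : Pt // x ∈ S})
    (p : (UDG S).Walk s a) (hsp : wlen p = dG S s a)
    (hmin : ∀ q : (UDG S).Walk s a, wlen q = dG S s a → p.length ≤ q.length)
    (ht : 2 ≤ p.length)
    (hreach : (UDG S).Reachable s c) (hca : dist (c : Pt) (a : Pt) ≤ 1) :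
    dG S s (p.getVert (p.length - 2)) < dG S s c := by
  set n := p.length - 2
  have hsplit := wlen_take_add_wlen_drop p n
  have hfar : 1 < dist (p.getVert n : Pt) a := by
    by_contra! hle
    obtain ⟨r, hr_len, hr_wlen⟩ := exists_walk_length_le_one_wlen_eq_dist hle
    have hshort : wlen ((p.take n).append r) = dG S s a := by
      refine le_antisymm ?_ (dG_le_wlen _)
      rw [wlen_append, hr_wlen, ← hsp, ← hsplit]
      linarith [dist_le_wlen (p.drop n)]
    have := hmin _ hshort
    rw [SimpleGraph.Walk.length_append, SimpleGraph.Walk.take_length] at this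
    omega
  obtain ⟨r, -, hr_wlen⟩ := exists_walk_length_le_one_wlen_eq_dist hca
  calc dG S s (p.getVert n) ≤ wlen (p.take n) := dG_le_wlen _
    _ ≤ dG S s a - dist (p.getVert n : Pt) a := by linarith [dist_le_wlen (p.drop n)]
    _ < dG S s a - 1 := by linarith
    _ ≤ dG S s c := by linarith [dG_le_dG_add_wlen hreach r]
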